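/- Let H be a finite simple graph containing no pair of true twins, let G = (V,E) be a finite simple graph, and let w : V → ℕ with w(v) ≥ 1 for all v ∈ V. Then G contains an induced subgraph isomorphic to H if and only if the blow-up G_w contains an induced subgraph isomorphic to H. -/

import Mathlib

open SimpleGraph

/-- `G` contains an induced subgraph isomorphic to `H`. -/
def HasInducedCopy {V W : Type*} (G : SimpleGraph V) (H : SimpleGraph W) : Prop :=
  ∃ S : Set V, Nonempty (G.induce S ≃g H)

/-- Two distinct vertices are true twins if they have the same closed neighbourhood. -/
def TrueTwins {V : Type*} (G : SimpleGraph V) (u v : V) : Prop :=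
  u ≠ v ∧ insert u (G.neighborSet u) = insert v (G.neighborSet v)

/-- The blow-up `G_w` of `G`: each vertex `v` is replaced by a clique of size `w v`,
and each edge by a complete bipartite graph between the corresponding cliques. -/
def blowup {V : Type*} (G : SimpleGraph V) (w : V → ℕ) :
    SimpleGraph ((v : V) × Fin (w v)) where
  Adj x y := x ≠ y ∧ (x.1 = y.1 ∨ G.Adj x.1 y.1)
  symm := ⟨fun x y h => ⟨h.1.symm, h.2.imp Eq.symm (fun a => a.symm)⟩⟩
  loopless := ⟨fun x h => h.1 rfl⟩

/-! An induced copy of `H` in `G` lifts to `G_w` by picking one vertex in each clique. Conversely,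
two distinct vertices of `G_w` in the same clique are true twins, and true twins of the host pull
back to true twins of an induced copy; so an induced copy of a twin-free `H` in `G_w` meets each
clique at most once and projects isomorphically onto an induced copy in `G`. -/

lemma hasInducedCopy_iff_isIndContained {V W : Type*} (G : SimpleGraph V) (H : SimpleGraph W) :
    HasInducedCopy G H ↔ H ⊴ G := by
  rw [isIndContained_iff_exists_iso_induce]
  exact exists_congr fun _ => ⟨fun ⟨e⟩ => ⟨e.symm⟩, fun ⟨e⟩ => ⟨e.symm⟩⟩

lemma SimpleGraph.Embedding.preimage_insert_neighborSet {V W : Type*} {H : SimpleGraph W}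
    {G : SimpleGraph V} (f : H ↪g G) (u : W) :
    f ⁻¹' insert (f u) (G.neighborSet (f u)) = insert u (H.neighborSet u) := by
  ext v
  simp only [Set.mem_preimage, Set.mem_insert_iff, mem_neighborSet, f.injective.eq_iff,
    f.map_adj_iff]

lemma TrueTwins.of_embedding {V W : Type*} {H : SimpleGraph W} {G : SimpleGraph V}
    (f : H ↪g G) {u v : W} (h : TrueTwins G (f u) (f v)) : TrueTwins H u v :=
  ⟨fun huv => h.1 (congrArg f huv), by
    rw [← f.preimage_insert_neighborSet, ← f.preimage_insert_neighborSet, h.2]⟩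

section Blowup

variable {V : Type*} {G : SimpleGraph V} {w : V → ℕ}

lemma blowup_adj_iff {x y : (v : V) × Fin (w v)} (hxy : x.1 = y.1 → x = y) :
    (blowup G w).Adj x y ↔ G.Adj x.1 y.1 := by
  refine ⟨?_, fun h => ⟨fun h' => G.ne_of_adj h (congrArg Sigma.fst h'), Or.inr h⟩⟩
  rintro ⟨hne, hfst | hadj⟩
  · exact absurd (hxy hfst) hne
  · exact hadj

lemma blowup_insert_neighborSet (x : (v : V) × Fin (w v)) :
    insert x ((blowup G w).neighborSet x) = {z | x.1 = z.1 ∨ G.Adj x.1 z.1} := by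
  ext z
  by_cases hzx : z = x
  · subst hzx
    simp
  · simp [hzx, blowup, Ne.symm hzx]

lemma blowup_trueTwins_of_fst_eq {x y : (v : V) × Fin (w v)} (hne : x ≠ y) (hxy : x.1 = y.1) :
    TrueTwins (blowup G w) x y :=
  ⟨hne, by rw [blowup_insert_neighborSet, blowup_insert_neighborSet, hxy]⟩

def blowupSection (hw : ∀ v, 1 ≤ w v) : G ↪g blowup G w where
  toFun v := ⟨v, ⟨0, hw v⟩⟩
  inj' _ _ h := congrArg Sigma.fst h
  map_rel_iff' := blowup_adj_iff fun h => by subst h; rfl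

lemma injective_fst_comp_of_forall_not_trueTwins {W : Type*} {H : SimpleGraph W}
    (hH : ∀ u v : W, ¬ TrueTwins H u v) (f : H ↪g blowup G w) :
    Function.Injective (Sigma.fst ∘ f) := by
  intro u v hfst
  by_contra hne
  exact hH u v (.of_embedding f (blowup_trueTwins_of_fst_eq (f.injective.ne hne) hfst))

def blowupProjection {W : Type*} {H : SimpleGraph W} (hH : ∀ u v : W, ¬ TrueTwins H u v)
    (f : H ↪g blowup G w) : H ↪g G where
  toFun := Sigma.fst ∘ f
  inj' := injective_fst_comp_of_forall_not_trueTwins hH f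
  map_rel_iff' := (blowup_adj_iff fun h =>
    congrArg f (injective_fst_comp_of_forall_not_trueTwins hH f h)).symm.trans f.map_adj_iff

end Blowup

theorem hasInducedCopy_blowup_iff_general {W V : Type*}
    (H : SimpleGraph W) (hH : ∀ u v : W, ¬ TrueTwins H u v)
    (G : SimpleGraph V) (w : V → ℕ) (hw : ∀ v, 1 ≤ w v) :
    HasInducedCopy G H ↔ HasInducedCopy (blowup G w) H := by
  rw [hasInducedCopy_iff_isIndContained, hasInducedCopy_iff_isIndContained]
  exact ⟨fun h => h.trans (blowupSection hw).isIndContained,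
    fun ⟨f⟩ => (blowupProjection hH f).isIndContained⟩

/-- If `H` has no pair of true twins, then a finite simple graph `G` contains
an induced copy of `H` if and only if the blow-up `G_w` does (weights `w(v) ≥ 1`). -/
theorem hasInducedCopy_blowup_iff {W V : Type*} [Fintype W] [Fintype V]
    (H : SimpleGraph W) (hH : ∀ u v : W, ¬ TrueTwins H u v)
    (G : SimpleGraph V) (w : V → ℕ) (hw : ∀ v, 1 ≤ w v) :
    HasInducedCopy G H ↔ HasInducedCopy (blowup G w) H :=
  hasInducedCopy_blowup_iff_general H hH G w hw
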